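/- arXiv:1805.08001 — 3 statements merged into one kernel-verified Lean document; each statement's English description precedes it below -/
import Mathlib

section
/- Let k be a field and A an integral domain that is a k-algebra equipped with an iterative higher derivation ∂ = {∂^(i)}_{i≥0} (satisfying ∂^(0)=id, the Leibniz rule, and iterativity). Then the kernel ker(∂) = ∩_{i≥1} ker(∂^(i)) is a factorially closed subring of A: if a, b ∈ A are nonzero and a·b ∈ ker(∂), then a ∈ ker(∂) and b ∈ ker(∂). -/
/-!
If `a ≠ 0` and `D m a` is the last nonzero term of `(D j a)_j` (it exists since `D 0 a = a`
and the family is locally finite), and likewise `D n b` for `b`, then the Leibniz rule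
collapses to `D (m + n) (a * b) = D m a * D n b`, which is nonzero in a domain. So if `a * b`
is killed by every `D i` with `i ≥ 1`, then `m + n = 0`, i.e. `a` and `b` are killed too.
-/

open Classical in
theorem Nat.exists_last_ne_zero {M : Type*} [Zero M] {f : ℕ → M} {i : ℕ} (hi : f i ≠ 0)
    {N : ℕ} (hN : ∀ j ≥ N, f j = 0) : ∃ m, f m ≠ 0 ∧ ∀ j > m, f j = 0 := by
  refine ⟨Nat.findGreatest (fun j => f j ≠ 0) N,
    Nat.findGreatest_spec (P := fun j => f j ≠ 0) ?_ hi, fun j hj => ?_⟩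
  · by_contra! hlt
    exact hi (hN i hlt.le)
  · by_cases hjN : j ≤ N
    · simpa using Nat.findGreatest_is_greatest hj hjN
    · exact hN j (by omega)

theorem leibniz_apply_add_mul_of_eq_zero_of_gt {A : Type*} [NonUnitalNonAssocSemiring A]
    {D : ℕ → A → A}
    (hLeibniz : ∀ (i : ℕ) (x y : A),
      D i (x * y) = ∑ p ∈ Finset.HasAntidiagonal.antidiagonal i, D p.1 x * D p.2 y)
    {x y : A} {m n : ℕ} (hx : ∀ j > m, D j x = 0) (hy : ∀ j > n, D j y = 0) :
    D (m + n) (x * y) = D m x * D n y := by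
  rw [hLeibniz]
  refine Finset.sum_eq_single (m, n) (fun ⟨p, q⟩ hpq hne => ?_) (by simp)
  rw [Finset.HasAntidiagonal.mem_antidiagonal] at hpq
  rcases lt_or_ge m p with hp | hp
  · rw [hx p hp, zero_mul]
  · have hq : n < q := by
      by_contra! hq
      exact hne (by simp only [Prod.mk.injEq]; omega)
    rw [hy q hq, mul_zero]

theorem stmt1_general (k : Type*) [Field k] (A : Type*) [CommRing A] [IsDomain A] [Algebra k A]
    (D : ℕ → A →ₗ[k] A)
    (h0 : D 0 = LinearMap.id)
    (hLeibniz : ∀ (i : ℕ) (x y : A),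
      D i (x * y) = ∑ p ∈ Finset.HasAntidiagonal.antidiagonal i, D p.1 x * D p.2 y)
    (hLocFin : ∀ x : A, ∃ N : ℕ, ∀ j ≥ N, D j x = 0)
    (a b : A) (ha : a ≠ 0) (hb : b ≠ 0)
    (hab : ∀ i : ℕ, 1 ≤ i → D i (a * b) = 0) :
    (∀ i : ℕ, 1 ≤ i → D i a = 0) ∧ (∀ i : ℕ, 1 ≤ i → D i b = 0) := by
  have hlast : ∀ x : A, x ≠ 0 → ∃ m, D m x ≠ 0 ∧ ∀ j > m, D j x = 0 := fun x hx => by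
    obtain ⟨N, hN⟩ := hLocFin x
    exact Nat.exists_last_ne_zero (f := fun j => D j x) (i := 0) (by simpa [h0] using hx) hN
  obtain ⟨m, hm, hm_gt⟩ := hlast a ha
  obtain ⟨n, hn, hn_gt⟩ := hlast b hb
  have htop : D (m + n) (a * b) = D m a * D n b :=
    leibniz_apply_add_mul_of_eq_zero_of_gt (D := fun i => D i) hLeibniz hm_gt hn_gt
  have hmn : m + n = 0 := by
    by_contra h
    exact mul_ne_zero hm hn (htop ▸ hab (m + n) (by omega))
  exact ⟨fun i hi => hm_gt i (by omega), fun i hi => hn_gt i (by omega)⟩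

/-- The kernel of a locally finite iterative higher derivation on a domain
is a factorially closed subring: if `a·b` is in the kernel with `a, b ≠ 0`, then both
`a` and `b` are in the kernel. -/
theorem stmt1 (k : Type*) [Field k] (A : Type*) [CommRing A] [IsDomain A] [Algebra k A]
    (D : ℕ → A →ₗ[k] A)
    (h0 : D 0 = LinearMap.id)
    (hLeibniz : ∀ (i : ℕ) (x y : A),
      D i (x * y) = ∑ p ∈ Finset.HasAntidiagonal.antidiagonal i, D p.1 x * D p.2 y)
    (hIter : ∀ u v : ℕ, (D u) ∘ₗ (D v) = ((u + v).choose u) • D (u + v))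
    (hLocFin : ∀ x : A, ∃ N : ℕ, ∀ j ≥ N, D j x = 0)
    (a b : A) (ha : a ≠ 0) (hb : b ≠ 0)
    (hab : ∀ i : ℕ, 1 ≤ i → D i (a * b) = 0) :
    (∀ i : ℕ, 1 ≤ i → D i a = 0) ∧ (∀ i : ℕ, 1 ≤ i → D i b = 0) :=
  stmt1_general k A D h0 hLeibniz hLocFin a b ha hb hab
end

section
/- Let k be a field of characteristic p > 0, u ≥ 1 an integer, λ ∈ k with λ ∉ k^{p^u}, and d' ≥ 1 an integer coprime to p^u (in fact with gcd(d', p) = 1). Then the ring R = k[x, y]/(y^{d'} − x^{p^u} + λ) is an integral domain, i.e., the polynomial y^{d'} − x^{p^u} + λ is irreducible in k[x, y]. -/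
/-!
Identify `k[x, y]` with `k[y][x]`, where the polynomial becomes `-(x^{p^u} - g)` with
`g = y^{d'} + λ`. Since `λ ≠ 0` and `p ∤ d'`, `g` is separable, hence squarefree, and any
irreducible factor `π` of `g` divides it exactly once. So `x^{p^u} - g` is Eisenstein at `π`.
-/

open MvPolynomial

namespace Polynomial

theorem separable_X_pow_add_C {K : Type*} [Field K] {n : ℕ} (a : K) (hn : (n : K) ≠ 0)
    (ha : a ≠ 0) : (X ^ n + C a).Separable := by
  simpa [sub_eq_add_neg] using separable_X_pow_sub_C (-a) hn (neg_ne_zero.mpr ha)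

theorem irreducible_X_pow_sub_C_of_prime_dvd {R : Type*} [CommRing R] [IsDomain R] {a q : R}
    (hq : Prime q) (hdvd : q ∣ a) (hsq : ¬q ^ 2 ∣ a) {n : ℕ} (hn : n ≠ 0) :
    Irreducible (X ^ n - C a : R[X]) := by
  have hmonic : (X ^ n - C a : R[X]).Monic := monic_X_pow_sub_C a hn
  have hdeg : (X ^ n - C a : R[X]).natDegree = n := natDegree_X_pow_sub_C
  have hP : (Ideal.span {q}).IsPrime := (Ideal.span_singleton_prime hq.ne_zero).mpr hq
  refine IsEisensteinAt.irreducible ?_ hP hmonic.isPrimitive (by omega)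
  refine hmonic.isEisensteinAt_of_mem_of_notMem hP.ne_top (fun {m} hm => ?_) ?_
  · rw [hdeg] at hm
    rw [coeff_sub, coeff_X_pow, if_neg hm.ne, coeff_C, zero_sub, neg_mem_iff]
    split_ifs
    · exact Ideal.mem_span_singleton.mpr hdvd
    · exact zero_mem _
  · rwa [coeff_sub, coeff_X_pow, if_neg (Ne.symm hn), coeff_C_zero, zero_sub, neg_mem_iff,
      Ideal.span_singleton_pow, Ideal.mem_span_singleton]

theorem irreducible_X_pow_sub_C_of_squarefree {R : Type*} [CommRing R] [IsDomain R]
    [UniqueFactorizationMonoid R] {a : R} (ha : Squarefree a) (ha' : ¬IsUnit a) {n : ℕ}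
    (hn : n ≠ 0) : Irreducible (X ^ n - C a : R[X]) := by
  obtain ⟨q, hq, hdvd⟩ := WfDvdMonoid.exists_irreducible_factor ha' ha.ne_zero
  refine irreducible_X_pow_sub_C_of_prime_dvd hq.prime hdvd (fun hsq => hq.not_isUnit ?_) hn
  exact ha q (by rwa [← sq])

theorem irreducible_X_pow_sub_C_X_pow_add_C {K : Type*} [Field K] {a : K} (ha : a ≠ 0)
    {d : ℕ} (hd : d ≠ 0) (hdK : (d : K) ≠ 0) {n : ℕ} (hn : n ≠ 0) :
    Irreducible (X ^ n - C (X ^ d + C a) : K[X][X]) := by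
  refine irreducible_X_pow_sub_C_of_squarefree (separable_X_pow_add_C a hdK ha).squarefree
    (fun hu => hd ?_) hn
  simpa using natDegree_eq_zero_of_isUnit hu

end Polynomial

namespace MvPolynomial

variable (R : Type*) [CommSemiring R]

noncomputable def finTwoAlgEquiv : MvPolynomial (Fin 2) R ≃ₐ[R] Polynomial (Polynomial R) :=
  (finSuccEquiv R 1).trans (Polynomial.mapAlgEquiv (uniqueAlgEquiv R (Fin 1)))

@[simp]
theorem finTwoAlgEquiv_X_zero : finTwoAlgEquiv R (X 0) = Polynomial.X := by
  simp [finTwoAlgEquiv, finSuccEquiv_X_zero]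

@[simp]
theorem finTwoAlgEquiv_X_one : finTwoAlgEquiv R (X 1) = Polynomial.C Polynomial.X := by
  rw [finTwoAlgEquiv, AlgEquiv.trans_apply, show (1 : Fin 2) = Fin.succ 0 from rfl,
    finSuccEquiv_X_succ]
  simp

@[simp]
theorem finTwoAlgEquiv_C (a : R) : finTwoAlgEquiv R (C a) = Polynomial.C (Polynomial.C a) := by
  rw [← algebraMap_eq, AlgEquiv.commutes]
  rfl

end MvPolynomial

theorem stmt3_general (k : Type*) [Field k] (p : ℕ) [Fact p.Prime] [CharP k p]
    (u : ℕ) (lam : k) (hlam : ∀ x : k, x ^ p ^ u ≠ lam)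
    (d' : ℕ) (hd' : 1 ≤ d') (hcop : Nat.Coprime d' p) :
    Irreducible ((X 1 : MvPolynomial (Fin 2) k) ^ d' - X 0 ^ p ^ u + C lam) := by
  have hp : p.Prime := Fact.out
  have hpu : p ^ u ≠ 0 := pow_ne_zero u hp.ne_zero
  have hlam0 : lam ≠ 0 := fun h => hlam 0 (by rw [h, zero_pow hpu])
  have hd'k : (d' : k) ≠ 0 := by
    rw [Ne, CharP.cast_eq_zero_iff k p]
    exact hp.coprime_iff_not_dvd.mp hcop.symm
  have hF := Polynomial.irreducible_X_pow_sub_C_X_pow_add_C hlam0 (by omega) hd'k hpu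
  rw [← MulEquiv.irreducible_iff (finTwoAlgEquiv k).toMulEquiv]
  convert (Associated.refl _).neg_right.irreducible hF using 1
  simp only [MulEquiv.coe_mk, AlgEquiv.toEquiv_eq_coe, EquivLike.coe_coe, map_add, map_sub,
    map_pow, finTwoAlgEquiv_X_one, finTwoAlgEquiv_X_zero, finTwoAlgEquiv_C]
  ring

/-- In characteristic `p > 0`, with `u ≥ 1`, `λ ∉ k^{p^u}` and
`gcd(d', p) = 1`, `d' ≥ 1`, the polynomial `y^{d'} − x^{p^u} + λ` is irreducible in
`k[x, y]`, i.e. `R = k[x,y]/(y^{d'} − x^{p^u} + λ)` is an integral domain. -/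
theorem stmt3 (k : Type*) [Field k] (p : ℕ) [Fact p.Prime] [CharP k p]
    (u : ℕ) (hu : 1 ≤ u) (lam : k) (hlam : ∀ x : k, x ^ p ^ u ≠ lam)
    (d' : ℕ) (hd' : 1 ≤ d') (hcop : Nat.Coprime d' p) :
    Irreducible ((X 1 : MvPolynomial (Fin 2) k) ^ d' - X 0 ^ p ^ u + C lam) :=
  stmt3_general k p u lam hlam d' hd' hcop
end

section
/- Let k be a field, σ₀ ⊆ N_ℚ a full-dimensional rational polyhedral cone with vertex 0, and e ∈ M a Demazure root of σ₀ with distinguished primitive ray generator μ_e. Define k-linear operators ∂_e^(i) on the semigroup algebra k[σ₀^∨ ∩ M] by ∂_e^(i)(χ^m) = C(⟨m, μ_e⟩, i)·χ^{m + i·e}. Then ∂_e = {∂_e^(i)}_{i≥0} is a locally finite iterative higher derivation on k[σ₀^∨ ∩ M]: ∂_e^(0) = id, the Leibniz rule ∂_e^(i)(fg) = Σ_{i1+i2=i} ∂_e^(i1)(f)·∂_e^(i2)(g) holds, ∂_e^(j)(f) = 0 for j ≫ 0 for each f, and ∂_e^(u)∘∂_e^(v) = C(u+v, u)·∂_e^(u+v).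 -/
/-!
On a monomial, `∂^(i) χ^m = C(⟨m, μ⟩, i) χ^(m + i e)`, and the root conditions say exactly that
`m + i e` stays in the semigroup iff `i ≤ ⟨m, μ⟩`; so the binomial coefficient vanishes whenever
the exponent leaves the semigroup, and on monomials the operators behave as on `k[x]` with
`∂^(i) xᵈ = C(d, i) x^(d - i)`. The Leibniz rule is then Vandermonde's identity for
`⟨m + m', μ⟩ = ⟨m, μ⟩ + ⟨m', μ⟩`, iterativity is `C(d, v) C(d - v, u) = C(u + v, u) C(d, u + v)`
because `⟨m + v e, μ⟩ = d - v`, and both extend to the whole algebra by (bi)linearity.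
-/

open Finset AddMonoidAlgebra
open scoped Classical

namespace DemazureRoot

theorem choose_mul_choose_sub (d u v : ℕ) :
    d.choose v * (d - v).choose u = (u + v).choose u * d.choose (u + v) := by
  have h := Nat.choose_mul (n := d) (Nat.le_add_left v u)
  rw [Nat.add_sub_cancel] at h
  rw [← h, Nat.choose_symm_add, Nat.mul_comm]

variable {k A : Type*} [Field k] [AddCommGroup A] {S : AddSubmonoid A}

variable (k S) in
noncomputable def monomialOrZero (x : A) : AddMonoidAlgebra k S :=
  if h : x ∈ S then single ⟨x, h⟩ 1 else 0

theorem monomialOrZero_coe (m : S) : monomialOrZero k S (m : A) = single m 1 :=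
  dif_pos m.2

theorem monomialOrZero_mul_of_mem {x y : A} (hx : x ∈ S) (hy : y ∈ S) :
    monomialOrZero k S x * monomialOrZero k S y = monomialOrZero k S (x + y) := by
  rw [monomialOrZero, monomialOrZero, monomialOrZero, dif_pos hx, dif_pos hy,
    dif_pos (S.add_mem hx hy), single_mul_single, one_mul]
  rfl

variable {ℓ : A →+ ℤ} {e : A}

variable (k ℓ e) in
def IsDemazureFamily (D : ℕ → AddMonoidAlgebra k S →ₗ[k] AddMonoidAlgebra k S) : Prop :=
  ∀ (i : ℕ) (m : S), D i (single m 1) =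
    ((ℓ m).toNat.choose i : k) • monomialOrZero k S ((m : A) + (i : ℤ) • e)

variable {D : ℕ → AddMonoidAlgebra k S →ₗ[k] AddMonoidAlgebra k S}

namespace IsDemazureFamily

theorem zero_eq_id (hD : IsDemazureFamily k ℓ e D) : D 0 = LinearMap.id := by
  ext m
  simp [hD 0 m, monomialOrZero_coe]

theorem apply_single_of_toNat_lt (hD : IsDemazureFamily k ℓ e D) {i : ℕ} {m : S}
    (h : (ℓ m).toNat < i) : D i (single m 1) = 0 := by
  rw [hD, Nat.choose_eq_zero_of_lt h, Nat.cast_zero, zero_smul]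

theorem eventually_eq_zero (hD : IsDemazureFamily k ℓ e D)
    (f : AddMonoidAlgebra k S) : ∃ N : ℕ, ∀ j ≥ N, D j f = 0 := by
  induction f using AddMonoidAlgebra.induction_linear with
  | zero => exact ⟨0, fun j _ => map_zero _⟩
  | add f g hf hg =>
    obtain ⟨N, hN⟩ := hf
    obtain ⟨N', hN'⟩ := hg
    refine ⟨max N N', fun j hj => ?_⟩
    rw [map_add, hN j (le_of_max_le_left hj), hN' j (le_of_max_le_right hj), add_zero]
  | single m c =>
    refine ⟨(ℓ m).toNat + 1, fun j hj => ?_⟩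
    rw [← mul_one c, ← smul_single', map_smul, hD.apply_single_of_toNat_lt (by omega), smul_zero]

end IsDemazureFamily

variable (S ℓ e) in
/-- `ℓ` plays the role of `⟨·, μ_e⟩`: starting from `m ∈ S` one can move exactly `ℓ m` steps
in the direction `e` without leaving `S`. -/
structure IsDemazureRoot : Prop where
  apply_eq_neg_one : ℓ e = -1
  add_smul_mem_iff : ∀ m ∈ S, ∀ i : ℕ, m + (i : ℤ) • e ∈ S ↔ (i : ℤ) ≤ ℓ m

namespace IsDemazureRoot

variable (hS : IsDemazureRoot S ℓ e)
include hS

theorem nonneg_of_mem {m : A} (hm : m ∈ S) : 0 ≤ ℓ m := by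
  simpa using (hS.add_smul_mem_iff m hm 0).mp (by simpa using hm)

theorem toNat_lt_of_add_smul_notMem {m : S} {i : ℕ} (h : (m : A) + (i : ℤ) • e ∉ S) :
    (ℓ m).toNat < i := by
  have := hS.nonneg_of_mem m.2
  have := (hS.add_smul_mem_iff m m.2 i).not.mp h
  omega

theorem choose_eq_zero_of_add_smul_notMem {m : S} {i : ℕ} (h : (m : A) + (i : ℤ) • e ∉ S) :
    (ℓ m).toNat.choose i = 0 :=
  Nat.choose_eq_zero_of_lt (hS.toNat_lt_of_add_smul_notMem h)

theorem toNat_add (a b : S) : (ℓ (a + b : S)).toNat = (ℓ a).toNat + (ℓ b).toNat := by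
  have := hS.nonneg_of_mem a.2
  have := hS.nonneg_of_mem b.2
  rw [AddSubmonoid.coe_add, map_add]
  omega

theorem toNat_add_smul (m : S) (i : ℕ) : (ℓ (m + (i : ℤ) • e)).toNat = (ℓ m).toNat - i := by
  have := hS.nonneg_of_mem m.2
  rw [map_add, map_zsmul, hS.apply_eq_neg_one]
  simp only [smul_eq_mul, mul_neg, mul_one]
  omega

end IsDemazureRoot

namespace IsDemazureFamily

variable (hD : IsDemazureFamily k ℓ e D) (hS : IsDemazureRoot S ℓ e)
include hD hS

theorem apply_single_mul_apply_single (i j : ℕ) (a b : S) :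
    D i (single a 1) * D j (single b 1) =
      (((ℓ a).toNat.choose i * (ℓ b).toNat.choose j : ℕ) : k) •
        monomialOrZero k S ((a + b : S) + ((i + j : ℕ) : ℤ) • e) := by
  rw [hD, hD, smul_mul_smul_comm, Nat.cast_mul]
  by_cases ha : (a : A) + (i : ℤ) • e ∈ S
  · by_cases hb : (b : A) + (j : ℤ) • e ∈ S
    · rw [monomialOrZero_mul_of_mem ha hb, AddSubmonoid.coe_add, Nat.cast_add, add_smul,
        add_add_add_comm]
    · simp [hS.choose_eq_zero_of_add_smul_notMem hb]
  · simp [hS.choose_eq_zero_of_add_smul_notMem ha]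

theorem leibniz (i : ℕ) (f g : AddMonoidAlgebra k S) :
    D i (f * g) = ∑ p ∈ antidiagonal i, D p.1 f * D p.2 g := by
  suffices (LinearMap.mul k _).compr₂ (D i) =
      ∑ p ∈ antidiagonal i, (LinearMap.mul k _).compl₁₂ (D p.1) (D p.2) by
    simpa using LinearMap.congr_fun₂ this f g
  ext a b : 4
  simp only [LinearMap.comp_apply, lsingle_apply, LinearMap.compr₂_apply, LinearMap.sum_apply,
    LinearMap.compl₁₂_apply, LinearMap.mul_apply', single_mul_single, mul_one]
  rw [hD, hS.toNat_add, Nat.add_choose_eq, Nat.cast_sum, sum_smul]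
  refine sum_congr rfl fun p hp => ?_
  rw [apply_single_mul_apply_single hD hS, mem_antidiagonal.mp hp]

theorem comp_apply_single (u v : ℕ) (m : S) :
    D u (D v (single m 1)) = ((u + v).choose u : k) • D (u + v) (single m 1) := by
  by_cases hm : (m : A) + (v : ℤ) • e ∈ S
  · rw [hD v, monomialOrZero, dif_pos hm, map_smul, hD u, hD (u + v), hS.toNat_add_smul,
      smul_smul, smul_smul, ← Nat.cast_mul, ← Nat.cast_mul, choose_mul_choose_sub, Nat.cast_add,
      add_smul, add_assoc, add_comm ((u : ℤ) • e)]
  · have hlt := hS.toNat_lt_of_add_smul_notMem hm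
    rw [hD v, Nat.choose_eq_zero_of_lt hlt, hD (u + v),
      Nat.choose_eq_zero_of_lt (hlt.trans_le (Nat.le_add_left v u))]
    simp

theorem comp_eq (u v : ℕ) : D u ∘ₗ D v = (u + v).choose u • D (u + v) := by
  ext m : 2
  simp only [LinearMap.comp_apply, LinearMap.smul_apply, lsingle_apply]
  rw [comp_apply_single hD hS, Nat.cast_smul_eq_nsmul]

end IsDemazureFamily

def pairing {n : ℕ} (μ : Fin n → ℤ) : (Fin n → ℤ) →+ ℤ :=
  AddMonoidHom.mk' (fun m => ∑ j, m j * μ j) fun a b => by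
    simp only [Pi.add_apply, add_mul, sum_add_distrib]

theorem isDemazureRoot_pairing {n : ℕ} {G : Finset (Fin n → ℤ)} {e μ : Fin n → ℤ} (hμ : μ ∈ G)
    (hroot1 : ∑ j, e j * μ j = -1) (hroot2 : ∀ v ∈ G, v ≠ μ → 0 ≤ ∑ j, e j * v j)
    {S : AddSubmonoid (Fin n → ℤ)} (hS : ∀ m : Fin n → ℤ, m ∈ S ↔ ∀ v ∈ G, 0 ≤ ∑ j, m j * v j) :
    IsDemazureRoot S (pairing μ) e := by
  refine ⟨hroot1, fun m hm i => ?_⟩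
  have hpair (v : Fin n → ℤ) : pairing v (m + (i : ℤ) • e) = pairing v m + i * pairing v e := by
    rw [map_add, map_zsmul, smul_eq_mul]
  rw [hS]
  change (∀ v ∈ G, 0 ≤ pairing v (m + (i : ℤ) • e)) ↔ _
  simp only [hpair]
  constructor
  · intro h
    have := h μ hμ
    rw [show pairing μ e = -1 from hroot1] at this
    linarith
  · intro h v hv
    rcases eq_or_ne v μ with rfl | hvμ
    · rw [show pairing v e = -1 from hroot1]
      linarith
    · have : 0 ≤ pairing v m := (hS m).mp hm v hv
      have : 0 ≤ pairing v e := hroot2 v hv hvμ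
      positivity

end DemazureRoot

/-- The operators `∂_e^(i)(χ^m) = C(⟨m,μ_e⟩, i)·χ^{m+ie}` attached to a
Demazure root `e` of a cone `σ₀` (with ray generators `G` and distinguished primitive
generator `μ ∈ G`) form a locally finite iterative higher derivation on the semigroup
algebra `k[σ₀^∨ ∩ M]`. -/
theorem stmt6 (k : Type*) [Field k] (n : ℕ) (G : Finset (Fin n → ℤ))
    (e μ : Fin n → ℤ) (hμ : μ ∈ G)
    (hroot1 : ∑ j, e j * μ j = -1)
    (hroot2 : ∀ v ∈ G, v ≠ μ → 0 ≤ ∑ j, e j * v j)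
    (S : AddSubmonoid (Fin n → ℤ))
    (hS : ∀ m : Fin n → ℤ, m ∈ S ↔ ∀ v ∈ G, 0 ≤ ∑ j, m j * v j)
    (D : ℕ → AddMonoidAlgebra k S →ₗ[k] AddMonoidAlgebra k S)
    (hD : ∀ (i : ℕ) (m : S),
      D i (AddMonoidAlgebra.single m (1 : k)) =
        if h : ((m : Fin n → ℤ) + (i : ℤ) • e) ∈ S then
          (((∑ j, (m : Fin n → ℤ) j * μ j).toNat.choose i : k) •
            AddMonoidAlgebra.single (⟨(m : Fin n → ℤ) + (i : ℤ) • e, h⟩ : S) (1 : k))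
        else 0) :
    D 0 = LinearMap.id ∧
    (∀ (i : ℕ) (f g : AddMonoidAlgebra k S),
      D i (f * g) = ∑ p ∈ antidiagonal i, D p.1 f * D p.2 g) ∧
    (∀ f : AddMonoidAlgebra k S, ∃ N : ℕ, ∀ j ≥ N, D j f = 0) ∧
    (∀ u v : ℕ, (D u) ∘ₗ (D v) = ((u + v).choose u) • D (u + v)) := by
  have hroot := DemazureRoot.isDemazureRoot_pairing hμ hroot1 hroot2 hS
  have hfam : DemazureRoot.IsDemazureFamily k (DemazureRoot.pairing μ) e D := fun i m => by
    rw [hD, DemazureRoot.monomialOrZero]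
    split_ifs
    exacts [rfl, (smul_zero _).symm]
  exact ⟨hfam.zero_eq_id, hfam.leibniz hroot, hfam.eventually_eq_zero, hfam.comp_eq hroot⟩
end
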